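/- The standard protocol P^∅ implements the knowledge-based program 𝐏 (instantiated with next(h) = |h| mod |L_in| and σ(h) = ∅) with respect to the context γ_∅(F) for each adversary model F ∈ {NF, CR, SO}. -/

import Mathlib

open scoped Classical

noncomputable section

namespace Inter

/-- Actions available to each agent. -/
inductive Act where
  | go
  | noop
deriving DecidableEq

/-- A move through the intersection: an incoming lane paired with an outgoing lane. -/
abbrev Move (kin kout : ℕ) := Fin kin × Fin kout

/-- An adversary: a conflict-free arrival schedule, a transmission environment and
transmitter/receiver failure functions. -/
structure Adversary (kin kout : ℕ) where
  arrive : ℕ → ℕ × Fin kin × Fin kout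
  conflictFree : ∀ i j : ℕ, i ≠ j → (arrive i).1 = (arrive j).1 →
    (arrive i).2.1 ≠ (arrive j).2.1
  T : Set ((Fin kin × ℕ) × (Fin kin × ℕ))
  T_front : ∀ l l' : Fin kin, ((l, 0), (l', 0)) ∈ T
  Ft : ℕ → ℕ → Bool
  Fr : ℕ → ℕ → Bool

/-- The lane component of a sensor reading: an incoming lane, ⊥ (not yet arrived),
or ⊤ (departed). -/
inductive LaneStatus (kin : ℕ) where
  | inLane (l : Fin kin)
  | notArrived
  | finished

/-- The minimal sensor reading: front, lane and intent. -/
structure Reading (kin kout : ℕ) where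
  front : Prop
  lane : LaneStatus kin
  intent : Fin kout

/-- Environment states record the adversary, the time, a queue for each incoming lane
and the set of departed agents. -/
structure EnvState (kin kout : ℕ) where
  adv : Adversary kin kout
  time : ℕ
  queue : Fin kin → List ℕ
  done : Set ℕ

/-- Local states: a memory state together with a sensor reading
(the minimal reading plus possibly extra sensor information). -/
abbrev LState (kin kout : ℕ) (Mem Extra : Type*) := Mem × Reading kin kout × Extra

/-- Global states: an environment state and local states for all agents. -/
abbrev GState (kin kout : ℕ) (Mem Extra : Type*) :=
  EnvState kin kout × (ℕ → LState kin kout Mem Extra)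

/-- A run. -/
abbrev Run (kin kout : ℕ) (Mem Extra : Type*) := ℕ → GState kin kout Mem Extra

/-- An action protocol maps each agent's local state to an action. -/
abbrev Prot (kin kout : ℕ) (Mem Extra : Type*) := ℕ → LState kin kout Mem Extra → Act

variable {kin kout : ℕ} {Mem Extra Msg : Type*}

/-- Agent `i` is at the front of some queue. -/
def isFront (e : EnvState kin kout) (i : ℕ) : Prop :=
  ∃ l : Fin kin, (e.queue l).head? = some i

/-- The (lane, position) of agent `i`, if it is in some queue. -/
def posAt (e : EnvState kin kout) (i : ℕ) : Option (Fin kin × ℕ) :=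
  if h : ∃ l : Fin kin, i ∈ e.queue l then some (h.choose, (e.queue h.choose).idxOf i)
  else none

/-- The intended departure lane of agent `i`, as given by the arrival schedule. -/
def intentOf (e : EnvState kin kout) (i : ℕ) : Fin kout := (e.adv.arrive i).2.2

/-- The move `(lane_i, intent_i)` of agent `i`, if it is in some queue. -/
def moveAt (e : EnvState kin kout) (i : ℕ) : Option (Move kin kout) :=
  (posAt e i).map (fun p => (p.1, intentOf e i))

/-- The minimal sensor reading of agent `i` in environment state `e`. -/
def minimalReading (e : EnvState kin kout) (i : ℕ) : Reading kin kout where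
  front := isFront e i
  lane :=
    if h : ∃ l : Fin kin, i ∈ e.queue l then LaneStatus.inLane h.choose
    else if i ∈ e.done then LaneStatus.finished else LaneStatus.notArrived
  intent := intentOf e i

/-- An information-exchange protocol: initial memories, extra sensor information,
a message function and a memory-update function. -/
structure IEP (kin kout : ℕ) (Mem Extra Msg : Type*) where
  initMem : ℕ → Mem
  extra : EnvState kin kout → ℕ → Extra
  msg : ℕ → LState kin kout Mem Extra → Act → Reading kin kout × Extra → Option Msg
  upd : ℕ → LState kin kout Mem Extra → Act → Set Msg → Mem

/-- One round of the system: agents act, queues are updated (dequeues for agents that go,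
enqueues for new arrivals), new sensor readings are taken, messages are broadcast and
received subject to the transmission environment and the failure functions, and memories
are updated. -/
def step (E : IEP kin kout Mem Extra Msg) (P : Prot kin kout Mem Extra)
    (g : GState kin kout Mem Extra) : GState kin kout Mem Extra :=
  let e := g.1
  let act : ℕ → Act := fun i => P i (g.2 i)
  let q' : Fin kin → List ℕ := fun l =>
    let q1 := match (e.queue l).head? with
      | some i => if act i = Act.go then (e.queue l).tail else e.queue l
      | none => e.queue l
    if h : ∃ i l', e.adv.arrive i = (e.time + 1, l, l') then q1 ++ [h.choose] else q1
  let done' : Set ℕ := e.done ∪ {i | isFront e i ∧ act i = Act.go}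
  let e' : EnvState kin kout := ⟨e.adv, e.time + 1, q', done'⟩
  let sens : ℕ → Reading kin kout × Extra := fun i => (minimalReading e' i, E.extra e' i)
  let rcv : ℕ → Set Msg := fun i =>
    if e.adv.Fr e.time i = true ∧ (posAt e' i).isSome = true then
      {m | ∃ j pj pi, E.msg j (g.2 j) (act j) (sens j) = some m ∧
            e.adv.Ft e.time j = true ∧
            posAt e' j = some pj ∧ posAt e' i = some pi ∧ (pj, pi) ∈ e.adv.T}
    else ∅
  (e', fun i => (E.upd i (g.2 i) (act i) (rcv i), sens i))

/-- An intersection context: an information-exchange protocol together with an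
adversary model. -/
structure Ctx (kin kout : ℕ) (Mem Extra Msg : Type*) where
  iep : IEP kin kout Mem Extra Msg
  adv : Set (Adversary kin kout)

/-- Initial global states: time 0, empty queues, no departed agents, an adversary
from the adversary model, and initial local states. -/
def Init (C : Ctx kin kout Mem Extra Msg) (g : GState kin kout Mem Extra) : Prop :=
  g.1.adv ∈ C.adv ∧ g.1.time = 0 ∧ (∀ l, g.1.queue l = []) ∧ g.1.done = ∅ ∧
  ∀ i, g.2 i = (C.iep.initMem i, minimalReading g.1 i, C.iep.extra g.1 i)

/-- The interpreted system `I_{γ,P}`: the set of runs of protocol `P` in context `γ`. -/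
def Runs (C : Ctx kin kout Mem Extra Msg) (P : Prot kin kout Mem Extra) :
    Set (Run kin kout Mem Extra) :=
  {r | Init C (r 0) ∧ ∀ m, r (m + 1) = step C.iep P (r m)}

/-- `front_i` holds at the point `(r,m)`. -/
def frontAt (r : Run kin kout Mem Extra) (m i : ℕ) : Prop := isFront (r m).1 i

/-- `going_i` abbreviates `front_i ∧ ◯¬front_i`. -/
def goingAt (r : Run kin kout Mem Extra) (m i : ℕ) : Prop :=
  frontAt r m i ∧ ¬ frontAt r (m + 1) i

/-- `GO(r,m)`: the set of agents that go through the intersection in round `m+1`. -/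
def GOs (r : Run kin kout Mem Extra) (m : ℕ) : Set ℕ := {i | goingAt r m i}

/-- Validity: an agent goes through the intersection only from the front of its queue. -/
def ValidityP (C : Ctx kin kout Mem Extra Msg) (P : Prot kin kout Mem Extra) : Prop :=
  ∀ r ∈ Runs C P, ∀ m i, goingAt r m i → frontAt r m i

/-- Safety: agents that go simultaneously have compatible moves. -/
def SafetyP (O : Move kin kout → Move kin kout → Prop)
    (C : Ctx kin kout Mem Extra Msg) (P : Prot kin kout Mem Extra) : Prop :=
  ∀ r ∈ Runs C P, ∀ m i j, i ≠ j → goingAt r m i → goingAt r m j →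
    ∀ mi mj, moveAt (r m).1 i = some mi → moveAt (r m).1 j = some mj → O mi mj

/-- Liveness: every agent at the front of a queue eventually goes. -/
def LivenessP (C : Ctx kin kout Mem Extra Msg) (P : Prot kin kout Mem Extra) : Prop :=
  ∀ r ∈ Runs C P, ∀ m i, frontAt r m i → ∃ m' ≥ m, goingAt r m' i

/-- An intersection protocol: an action protocol satisfying Validity, Safety and Liveness. -/
def IsIntersectionProtocol (O : Move kin kout → Move kin kout → Prop)
    (C : Ctx kin kout Mem Extra Msg) (P : Prot kin kout Mem Extra) : Prop :=
  ValidityP C P ∧ SafetyP O C P ∧ LivenessP C P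

/-- `safe-to-go_i` at `(r,m)`: `i` is at the front of its queue (position 0) and the moves
of the agents in `GO(r,m) ∪ {i}` are pairwise compatible. -/
def safeToGo (O : Move kin kout → Move kin kout → Prop)
    (r : Run kin kout Mem Extra) (m i : ℕ) : Prop :=
  (∃ p, posAt (r m).1 i = some p ∧ p.2 = 0) ∧
  ∀ j ∈ GOs r m ∪ {i}, ∀ k ∈ GOs r m ∪ {i}, j ≠ k →
    ∀ mj mk, moveAt (r m).1 j = some mj → moveAt (r m).1 k = some mk → O mj mk

/-- `P` has unnecessary waiting with respect to `γ`. -/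
def UnnecessaryWaiting (O : Move kin kout → Move kin kout → Prop)
    (C : Ctx kin kout Mem Extra Msg) (P : Prot kin kout Mem Extra) : Prop :=
  ∃ r ∈ Runs C P, ∃ m i, safeToGo O r m i ∧ i ∉ GOs r m

/-- The time at which agent `i` goes through the intersection in run `r` (∞ if never). -/
def gotime (r : Run kin kout Mem Extra) (i : ℕ) : ℕ∞ :=
  sInf {n : ℕ∞ | ∃ m : ℕ, goingAt r m i ∧ n = (m : ℕ∞)}

/-- `P` dominates `P'`: on all corresponding runs, every agent goes at least as early. -/
def Dominates (C : Ctx kin kout Mem Extra Msg) (P P' : Prot kin kout Mem Extra) : Prop :=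
  ∀ r ∈ Runs C P, ∀ r' ∈ Runs C P', r 0 = r' 0 → ∀ i, gotime r i ≤ gotime r' i

def StrictDominates (C : Ctx kin kout Mem Extra Msg) (P P' : Prot kin kout Mem Extra) : Prop :=
  Dominates C P P' ∧ ¬ Dominates C P' P

/-- `P` is optimal: no intersection protocol strictly dominates it. -/
def Optimal (O : Move kin kout → Move kin kout → Prop)
    (C : Ctx kin kout Mem Extra Msg) (P : Prot kin kout Mem Extra) : Prop :=
  ¬ ∃ P' : Prot kin kout Mem Extra,
      IsIntersectionProtocol O C P' ∧ StrictDominates C P' P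

/-- `P` lexicographically dominates `P'`. -/
def LexDominates (C : Ctx kin kout Mem Extra Msg) (P P' : Prot kin kout Mem Extra) : Prop :=
  ∀ r ∈ Runs C P, ∀ r' ∈ Runs C P', r 0 = r' 0 →
    (∀ m, GOs r m = GOs r' m) ∨
    ∃ m, (∀ k < m, GOs r k = GOs r' k) ∧ GOs r m ≠ GOs r' m ∧ GOs r' m ⊂ GOs r m

def StrictLexDominates (C : Ctx kin kout Mem Extra Msg) (P P' : Prot kin kout Mem Extra) :
    Prop :=
  LexDominates C P P' ∧ ¬ LexDominates C P' P

/-- `P` is lexicographically optimal: no intersection protocol strictly lexicographically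
dominates it. -/
def LexOptimal (O : Move kin kout → Move kin kout → Prop)
    (C : Ctx kin kout Mem Extra Msg) (P : Prot kin kout Mem Extra) : Prop :=
  ¬ ∃ P' : Prot kin kout Mem Extra,
      IsIntersectionProtocol O C P' ∧ StrictLexDominates C P' P

/-- Knowledge: `K_i φ` holds at `(r,m)` iff `φ` holds at all points of the system where
agent `i` has the same local state. -/
def Kn (S : Set (Run kin kout Mem Extra)) (i : ℕ)
    (φ : Run kin kout Mem Extra → ℕ → Prop) (r : Run kin kout Mem Extra) (m : ℕ) : Prop :=
  ∀ r' ∈ S, ∀ m', (r' m').2 i = (r m).2 i → φ r' m'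

/-- The adversary model has no failures. -/
def NoFailures (C : Ctx kin kout Mem Extra Msg) : Prop :=
  ∀ α ∈ C.adv, ∀ k i, α.Ft k i = true ∧ α.Fr k i = true

/-- Full information exchange: every agent broadcasts (an injective encoding of) its
entire local state in every round, and records every broadcast it receives. -/
def FullInfo (C : Ctx kin kout Mem Extra Msg) : Prop :=
  (∃ enc : LState kin kout Mem Extra → Msg, Function.Injective enc ∧
      ∀ i s a o, C.iep.msg i s a o = some (enc s)) ∧
  (∀ i s a, Function.Injective fun B : Set Msg => C.iep.upd i s a B)

/-- A sufficiently rich context: every agent that will be at the front of some lane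
broadcasts a message encoding its lane and intent, tagged as coming from the front;
no other message is tagged as a front message; and each agent records the
(lane, intent) pair of each front agent it hears from. -/
def SufficientlyRich (C : Ctx kin kout Mem Extra Msg) : Prop :=
  ∃ dec : Msg → Option (Move kin kout),
    (∀ i s a (o : Reading kin kout × Extra) (l : Fin kin),
        o.1.front → o.1.lane = LaneStatus.inLane l →
        ∃ msg, C.iep.msg i s a o = some msg ∧ dec msg = some (l, o.1.intent)) ∧
    (∀ i s a (o : Reading kin kout × Extra), ¬ o.1.front →
        ∀ msg, C.iep.msg i s a o = some msg → dec msg = none) ∧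
    (∃ rec : Mem → Set (Move kin kout),
        ∀ i s a B, rec (C.iep.upd i s a B) = {mv | ∃ msg ∈ B, dec msg = some mv})

/-- The set of agents at the front of a queue. -/
def FrontSet (e : EnvState kin kout) : Set ℕ := {i | isFront e i}

/-- `P` depends only on the agents at the front of their queues. -/
def DependsOnlyOnFront (C : Ctx kin kout Mem Extra Msg) (P : Prot kin kout Mem Extra) :
    Prop :=
  ∀ r ∈ Runs C P, ∀ r' ∈ Runs C P, ∀ m m' i,
    FrontSet (r m).1 = FrontSet (r' m').1 → P i ((r m).2 i) = P i ((r' m').2 i)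

/-- The choices of an adversary in a single round: arrivals, the transmission
environment and the failure values. -/
structure Choice (kin kout : ℕ) where
  arrivals : Set (ℕ × Fin kin × Fin kout)
  T : Set ((Fin kin × ℕ) × (Fin kin × ℕ))
  Ft : ℕ → Bool
  Fr : ℕ → Bool

/-- The choices of adversary `α` in round `m+1`. -/
def choiceAt (α : Adversary kin kout) (m : ℕ) : Choice kin kout where
  arrivals := {p | α.arrive p.1 = (m + 1, p.2.1, p.2.2)}
  T := α.T
  Ft := fun i => α.Ft m i
  Fr := fun i => α.Fr m i

/-- The adversary history `H(α,m) = ⟨α_0, …, α_{m-1}⟩`. -/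
def hist (α : Adversary kin kout) (m : ℕ) : List (Choice kin kout) :=
  (List.range m).map (choiceAt α)

/-- The adversary history of run `r` up to time `m`. -/
def histOf (r : Run kin kout Mem Extra) (m : ℕ) : List (Choice kin kout) :=
  hist (r 0).1.adv m

/-- An intersection policy: a map from adversary histories to sets of permitted moves. -/
abbrev Policy (kin kout : ℕ) := List (Choice kin kout) → Set (Move kin kout)

/-- The set `H_γ` of adversary histories of the context. -/
def Hists (C : Ctx kin kout Mem Extra Msg) : Set (List (Choice kin kout)) :=
  {h | ∃ α ∈ C.adv, ∃ m, h = hist α m}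

/-- A feasible infinite sequence of histories: one arising from a single adversary. -/
def Feasible (F : Set (Adversary kin kout)) (h : ℕ → List (Choice kin kout)) : Prop :=
  ∃ α ∈ F, ∀ m, h m = hist α m

/-- Conflict-freedom of an intersection policy. -/
def ConflictFree (O : Move kin kout → Move kin kout → Prop)
    (C : Ctx kin kout Mem Extra Msg) (σ : Policy kin kout) : Prop :=
  ∀ h ∈ Hists C, ∀ mv ∈ σ h, ∀ mv' ∈ σ h, mv ≠ mv' → O mv mv'

/-- Fairness of an intersection policy. -/
def FairPolicy (C : Ctx kin kout Mem Extra Msg) (σ : Policy kin kout) : Prop :=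
  ∀ h : ℕ → List (Choice kin kout), Feasible C.adv h →
    ∀ mv : Move kin kout, ∀ m, ∃ m' ≥ m, mv ∈ σ (h m')

/-- A correct intersection policy: conflict-free and fair. -/
def CorrectPolicy (O : Move kin kout → Move kin kout → Prop)
    (C : Ctx kin kout Mem Extra Msg) (σ : Policy kin kout) : Prop :=
  ConflictFree O C σ ∧ FairPolicy C σ

/-- A synchronous context: the time is encoded in each agent's local state. -/
def Synchronous (C : Ctx kin kout Mem Extra Msg) : Prop :=
  ∃ clock : LState kin kout Mem Extra → ℕ,
    ∀ P : Prot kin kout Mem Extra, ∀ r ∈ Runs C P, ∀ m i, clock ((r m).2 i) = m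

/-- The knowledge condition of the knowledge-based program `P^σ`:
`front_i ∧ (lane_i, intent_i) ∈ σ`. -/
def phiSigma (σ : Policy kin kout) (i : ℕ) (r : Run kin kout Mem Extra) (m : ℕ) : Prop :=
  frontAt r m i ∧ ∃ mv, moveAt (r m).1 i = some mv ∧ mv ∈ σ (histOf r m)

/-- `P` implements the knowledge-based program `if K_i φ_i then go else noop` in `γ`. -/
def Implements (C : Ctx kin kout Mem Extra Msg) (P : Prot kin kout Mem Extra)
    (φ : ℕ → Run kin kout Mem Extra → ℕ → Prop) : Prop :=
  ∀ r ∈ Runs C P, ∀ m i, (P i ((r m).2 i) = Act.go ↔ Kn (Runs C P) i (φ i) r m)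

/-- Behavioral equivalence: the protocols take the same actions at all reachable states. -/
def BehEq (C : Ctx kin kout Mem Extra Msg) (P P' : Prot kin kout Mem Extra) : Prop :=
  (∀ r ∈ Runs C P, ∀ m i, P i ((r m).2 i) = P' i ((r m).2 i)) ∧
  (∀ r ∈ Runs C P', ∀ m i, P i ((r m).2 i) = P' i ((r m).2 i))

/-- `γ` is `σ`-aware. -/
def SigmaAware (C : Ctx kin kout Mem Extra Msg) (σ : Policy kin kout) : Prop :=
  ∀ P : Prot kin kout Mem Extra, ∀ r ∈ Runs C P, ∀ m i (l : Fin kin) (l' : Fin kout),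
    (l, l') ∈ σ (histOf r m) → i ∈ (r m).1.queue l →
    Kn (Runs C P) i (fun r' m' => (l, l') ∈ σ (histOf r' m')) r m

/-- `γ` is `next`-aware. -/
def NextAware (C : Ctx kin kout Mem Extra Msg)
    (next : List (Choice kin kout) → Fin kin) : Prop :=
  ∀ P : Prot kin kout Mem Extra, ∀ r ∈ Runs C P, ∀ m i (l : Fin kin),
    next (histOf r m) = l →
    Kn (Runs C P) i (fun r' m' => next (histOf r' m') = l) r m

/-- Cyclic distance from `a` to `b` (mod `kin`). -/
def distC (a b : Fin kin) : ℕ := (b.val + kin - a.val) % kin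

/-- `l` lies in the cyclic interval `[a, b)` of incoming lanes. -/
def inCyc (a b l : Fin kin) : Prop := distC a l < distC a b

/-- `mv` is compatible with every move in `S`. -/
def compatAll (O : Move kin kout → Move kin kout → Prop)
    (S : Set (Move kin kout)) (mv : Move kin kout) : Prop :=
  ∀ mv' ∈ S, O mv mv'

/-- The proposition `V_i` of the knowledge-based program `𝐏`. -/
def Vprop (O : Move kin kout → Move kin kout → Prop) (σ : Policy kin kout)
    (next : List (Choice kin kout) → Fin kin) (i : ℕ)
    (r : Run kin kout Mem Extra) (m : ℕ) : Prop :=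
  ∃ mv, moveAt (r m).1 i = some mv ∧ mv ∉ σ (histOf r m) ∧
    (∀ j mj, goingAt r m j → moveAt (r m).1 j = some mj →
        mj ∈ σ (histOf r m) → O mv mj) ∧
    (∀ j mj, j ≠ i → goingAt r m j → moveAt (r m).1 j = some mj →
        mj ∉ σ (histOf r m) → inCyc (next (histOf r m)) mv.1 mj.1 → O mv mj)

/-- The knowledge condition of the knowledge-based program `𝐏`:
`front_i ∧ ((lane_i, intent_i) ∈ σ ∨ V_i)`. -/
def phiP (O : Move kin kout → Move kin kout → Prop) (σ : Policy kin kout)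
    (next : List (Choice kin kout) → Fin kin) (i : ℕ)
    (r : Run kin kout Mem Extra) (m : ℕ) : Prop :=
  frontAt r m i ∧
    ((∃ mv, moveAt (r m).1 i = some mv ∧ mv ∈ σ (histOf r m)) ∨ Vprop O σ next i r m)

/-- Fairness of a `next` function. -/
def FairNext (C : Ctx kin kout Mem Extra Msg)
    (next : List (Choice kin kout) → Fin kin) : Prop :=
  ∀ h : ℕ → List (Choice kin kout), Feasible C.adv h →
    ∀ m (l : Fin kin), ∃ m' ≥ m, next (h m') = l

/-- Fairness of a pair `(σ, next)`. -/
def PairFair (O : Move kin kout → Move kin kout → Prop)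
    (C : Ctx kin kout Mem Extra Msg) (σ : Policy kin kout)
    (next : List (Choice kin kout) → Fin kin) : Prop :=
  ∀ h : ℕ → List (Choice kin kout), Feasible C.adv h →
    ∀ m (mv : Move kin kout), ∃ m' ≥ m,
      mv ∈ σ (h m') ∨ (next (h m') = mv.1 ∧ compatAll O (σ (h m')) mv)

/-- `next(h) = |h| mod |L_in|` at time `t`. -/
def nextL (hkin : 0 < kin) (t : ℕ) : Fin kin := ⟨t % kin, Nat.mod_lt _ hkin⟩

/-- The stages of the construction of the set `Pos_i`, starting from the lane `nxt` and
proceeding in cyclic order; `M` is the set of moves received from front agents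
(empty when there is no communication). -/
def posStage (hkin : 0 < kin) (O : Move kin kout → Move kin kout → Prop)
    (M : Set (Move kin kout)) (nxt : Fin kin) : ℕ → Set (Move kin kout)
  | 0 => ∅
  | t + 1 =>
    let S := posStage hkin O M nxt t
    let l : Fin kin := ⟨(nxt.val + t) % kin, Nat.mod_lt _ hkin⟩
    if ∃ l' : Fin kout, (l, l') ∈ M then
      S ∪ {mv | mv.1 = l ∧ mv ∈ M ∧ compatAll O S mv}
    else
      S ∪ {mv | mv.1 = l ∧ compatAll O S mv}

/-- The set `Pos_i` computed from the received moves `M`, the lane `nxt = next` and the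
agent's own lane `lanei`. -/
def PosSet (hkin : 0 < kin) (O : Move kin kout → Move kin kout → Prop)
    (M : Set (Move kin kout)) (nxt lanei : Fin kin) : Set (Move kin kout) :=
  posStage hkin O M nxt (distC nxt lanei)

/-- The stage `Pos_i^l` of the construction of `Pos_i`, for a lane `l` in the cyclic
interval `[nxt, lane_i)`. -/
def PosUpTo (hkin : 0 < kin) (O : Move kin kout → Move kin kout → Prop)
    (M : Set (Move kin kout)) (nxt l : Fin kin) : Set (Move kin kout) :=
  posStage hkin O M nxt (distC nxt l + 1)

/-- The adversary model with no failures. -/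
def NFadv (kin kout : ℕ) : Set (Adversary kin kout) :=
  {α | ∀ k i, α.Ft k i = true ∧ α.Fr k i = true}

/-- The adversary model with crash failures. -/
def CRadv (kin kout : ℕ) : Set (Adversary kin kout) :=
  {α | (∀ k i, α.Fr k i = true) ∧
    ∀ k i, α.Ft k i = false → ∀ k', k < k' → α.Ft k' i = false}

/-- The adversary model with sending omissions. -/
def SOadv (kin kout : ℕ) : Set (Adversary kin kout) :=
  {α | ∀ k i, α.Fr k i = true}

/-- The information-exchange protocol of `γ_∅`: a single memory state, no messages,
and sensor readings `⟨front_i, lane_i, intent_i, time_i⟩`. -/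
def E0 (kin kout : ℕ) : IEP kin kout Unit ℕ Empty where
  initMem _ := ()
  extra e _ := e.time
  msg _ _ _ _ := none
  upd _ _ _ _ := ()

/-- The context `γ_∅(F)`. -/
def gammaEmpty (kin kout : ℕ) (F : Set (Adversary kin kout)) : Ctx kin kout Unit ℕ Empty :=
  ⟨E0 kin kout, F⟩

/-- The protocol `P^∅`: go iff at the front and own move compatible with `Pos_i`. -/
def Pempty (hkin : 0 < kin) (O : Move kin kout → Move kin kout → Prop) :
    Prot kin kout Unit ℕ := fun _ s =>
  match s.2.1.lane with
  | LaneStatus.inLane l =>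
      if s.2.1.front ∧ compatAll O (PosSet hkin O ∅ (nextL hkin s.2.2) l) (l, s.2.1.intent)
      then Act.go else Act.noop
  | _ => Act.noop

/-- The information-exchange protocol of `γ_intent`: exactly the agents at the front of a
lane broadcast `(lane_i, intent_i)`; the memory is the set of moves received in the
current round; sensor readings are `⟨front_i, lane_i, intent_i, time_i⟩`. -/
def Eintent (kin kout : ℕ) : IEP kin kout (Set (Move kin kout)) ℕ (Move kin kout) where
  initMem _ := ∅
  extra e _ := e.time
  msg _ _ _ o :=
    if o.1.front then
      match o.1.lane with
      | LaneStatus.inLane l => some (l, o.1.intent)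
      | _ => none
    else none
  upd _ _ _ B := B

/-- The context `γ_intent(F)`. -/
def gammaIntent (kin kout : ℕ) (F : Set (Adversary kin kout)) :
    Ctx kin kout (Set (Move kin kout)) ℕ (Move kin kout) :=
  ⟨Eintent kin kout, F⟩

/-- The protocol `P^intent`: go iff at the front and own move compatible with `Pos_i`
computed from the received moves. -/
def Pintent (hkin : 0 < kin) (O : Move kin kout → Move kin kout → Prop) :
    Prot kin kout (Set (Move kin kout)) ℕ := fun _ s =>
  match s.2.1.lane with
  | LaneStatus.inLane l =>
      if s.2.1.front ∧
          compatAll O (PosSet hkin O s.1 (nextL hkin s.2.2) l) (l, s.2.1.intent)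
      then Act.go else Act.noop
  | _ => Act.noop

end Inter

open Inter

/-! Agent `i`'s local state in `γ_∅` consists of its reading `⟨front, lane, intent⟩` and the
time. If `P^∅` lets `i` go, every agent `j ≠ i` going from a lane in `[next, lane_i)` passed the
same test, so its move lies in `Pos_i` and is compatible with that of `i`. If `P^∅` makes `i`
wait because some `mv ∈ Pos_i` is incompatible with its move, consider the failure-free run in
which only `i` and one agent with move `mv` arrive by time `m`, both at time `m`: there `i` has
the same local state, the other agent goes since `mv` is compatible with the `Pos` set of its
lane, and `φ_i` fails. Failure-free adversaries belong to each of NF, CR and SO. -/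

namespace Inter

variable {kin kout : ℕ} {Mem Extra Msg : Type*}

lemma distC_lt (hkin : 0 < kin) (a b : Fin kin) : distC a b < kin :=
  Nat.mod_lt _ hkin

section PosSet

variable (hkin : 0 < kin) (O : Move kin kout → Move kin kout → Prop)

lemma mk_add_mod_eq_iff (a b : Fin kin) {t : ℕ} (ht : t < kin) :
    (⟨(a.val + t) % kin, Nat.mod_lt _ hkin⟩ : Fin kin) = b ↔ distC a b = t := by
  have ha := a.isLt
  have hb := b.isLt
  rw [Fin.ext_iff, distC]
  dsimp only
  have hmod : ∀ x, x < 2 * kin → x % kin = if x < kin then x else x - kin := fun x hx => by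
    split_ifs with h
    · exact Nat.mod_eq_of_lt h
    · rw [Nat.mod_eq_sub_mod (by omega), Nat.mod_eq_of_lt (by omega)]
  rw [hmod _ (by omega), hmod _ (by omega)]
  split_ifs <;> omega

lemma mem_posStage_empty_iff (nxt : Fin kin) {t : ℕ} (ht : t ≤ kin) (mv : Move kin kout) :
    mv ∈ posStage hkin O ∅ nxt t ↔
      distC nxt mv.1 < t ∧ compatAll O (posStage hkin O ∅ nxt (distC nxt mv.1)) mv := by
  induction t with
  | zero => simp [posStage]
  | succ t ih =>
    have hlane := mk_add_mod_eq_iff hkin nxt mv.1 (t := t) (by omega)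
    simp only [posStage, Set.mem_empty_iff_false, exists_false, if_false, Set.mem_union,
      Set.mem_ofPred_eq, ih (by omega : t ≤ kin)]
    constructor
    · rintro (⟨hlt, hcompat⟩ | ⟨hl, hcompat⟩)
      · exact ⟨by omega, hcompat⟩
      · rw [hlane.1 hl.symm]
        exact ⟨by omega, hcompat⟩
    · rintro ⟨hlt, hcompat⟩
      rcases Nat.lt_succ_iff_lt_or_eq.1 hlt with hlt | heq
      · exact Or.inl ⟨hlt, hcompat⟩
      · exact Or.inr ⟨(hlane.2 heq).symm, heq ▸ hcompat⟩

lemma mem_PosSet_empty_iff (nxt l : Fin kin) (mv : Move kin kout) :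
    mv ∈ PosSet hkin O ∅ nxt l ↔
      inCyc nxt l mv.1 ∧ compatAll O (PosSet hkin O ∅ nxt mv.1) mv :=
  mem_posStage_empty_iff hkin O nxt (distC_lt hkin nxt l).le mv

end PosSet

section Step

variable {E : IEP kin kout Mem Extra Msg} {P : Prot kin kout Mem Extra}
  {g : GState kin kout Mem Extra} {l : Fin kin}

lemma step_queue_eq_singleton (hq : g.1.queue l = []) {a : ℕ} {x : Fin kout}
    (ha : g.1.adv.arrive a = (g.1.time + 1, l, x)) : (step E P g).1.queue l = [a] := by
  have harr : ∃ n x, g.1.adv.arrive n = (g.1.time + 1, l, x) := ⟨a, x, ha⟩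
  have hchoose : harr.choose = a := by
    obtain ⟨y, hy⟩ := harr.choose_spec
    by_contra hne
    exact g.1.adv.conflictFree _ _ hne (by rw [hy, ha]) (by rw [hy, ha])
  simp only [step, hq, List.head?_nil, dif_pos harr, hchoose, List.nil_append]

lemma mem_queue_of_mem_step_queue (hno : ∀ a x, g.1.adv.arrive a ≠ (g.1.time + 1, l, x))
    {n : ℕ} (hn : n ∈ (step E P g).1.queue l) : n ∈ g.1.queue l := by
  have harr : ¬ ∃ a x, g.1.adv.arrive a = (g.1.time + 1, l, x) := fun ⟨a, x, h⟩ => hno a x h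
  simp only [step, dif_neg harr] at hn
  split at hn
  · split_ifs at hn
    · exact List.mem_of_mem_tail hn
    · exact hn
  · exact hn

lemma step_queue_eq_tail (hno : ∀ a x, g.1.adv.arrive a ≠ (g.1.time + 1, l, x)) {a : ℕ}
    {t : List ℕ} (hq : g.1.queue l = a :: t) (hgo : P a (g.2 a) = Act.go) :
    (step E P g).1.queue l = t := by
  have harr : ¬ ∃ a x, g.1.adv.arrive a = (g.1.time + 1, l, x) := fun ⟨a, x, h⟩ => hno a x h
  simp only [step, dif_neg harr, hq, List.head?_cons, if_pos hgo, List.tail_cons]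

lemma isFront_step_of_ne_go {j : ℕ} (hj : isFront g.1 j) (hgo : P j (g.2 j) ≠ Act.go) :
    isFront (step E P g).1 j := by
  obtain ⟨l, hl⟩ := hj
  obtain ⟨t, hq⟩ : ∃ t, g.1.queue l = j :: t := by
    cases hq : g.1.queue l with
    | nil => simp [hq] at hl
    | cons a t => simp_all
  refine ⟨l, ?_⟩
  simp only [step, hq, List.head?_cons, if_neg hgo]
  split <;> simp

end Step

section Reading

variable {e : EnvState kin kout} {i : ℕ}

lemma minimalReading_lane_eq_choose (h : ∃ l, i ∈ e.queue l) :
    (minimalReading e i).lane = .inLane h.choose := by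
  simp [minimalReading, h]

lemma exists_lane_of_isFront (h : isFront e i) : ∃ l, (minimalReading e i).lane = .inLane l := by
  obtain ⟨l, hl⟩ := h
  exact ⟨_, minimalReading_lane_eq_choose ⟨l, List.mem_of_mem_head? hl⟩⟩

lemma moveAt_eq_of_lane {l : Fin kin} (h : (minimalReading e i).lane = .inLane l) :
    moveAt e i = some (l, (minimalReading e i).intent) := by
  have hex : ∃ l, i ∈ e.queue l := by
    by_contra hex
    simp only [minimalReading, dif_neg hex] at h
    split_ifs at h
  have hl : hex.choose = l := by
    simpa [minimalReading_lane_eq_choose hex] using h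
  simp [moveAt, posAt, hex, hl]
  rfl

lemma minimalReading_eq_of_queue_eq_singleton {l : Fin kin} (hq : e.queue l = [i])
    (huniq : ∀ l', i ∈ e.queue l' → l' = l) :
    minimalReading e i = ⟨True, .inLane l, intentOf e i⟩ := by
  have hex : ∃ l, i ∈ e.queue l := ⟨l, by simp [hq]⟩
  have hfront : isFront e i := ⟨l, by simp [hq]⟩
  simp only [minimalReading, dif_pos hex, huniq _ hex.choose_spec, eq_true hfront]

end Reading

lemma Pempty_eq_go_iff (hkin : 0 < kin) (O : Move kin kout → Move kin kout → Prop) (i : ℕ)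
    (rd : Reading kin kout) (t : ℕ) :
    Pempty hkin O i ((), rd, t) = Act.go ↔
      ∃ l, rd.lane = .inLane l ∧ rd.front ∧
        compatAll O (PosSet hkin O ∅ (nextL hkin t) l) (l, rd.intent) := by
  obtain ⟨front, lane, intent⟩ := rd
  cases lane <;> simp [Pempty]

section Runs

variable {C : Ctx kin kout Mem Extra Msg} {P : Prot kin kout Mem Extra}
  {r : Run kin kout Mem Extra}

lemma Runs.time_eq (hr : r ∈ Runs C P) (m : ℕ) : (r m).1.time = m := by
  induction m with
  | zero => exact hr.1.2.1
  | succ m ih => rw [hr.2 m]; exact congrArg (· + 1) ih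

lemma Runs.adv_eq (hr : r ∈ Runs C P) (m : ℕ) : (r m).1.adv = (r 0).1.adv := by
  induction m with
  | zero => rfl
  | succ m ih => rw [hr.2 m]; exact ih

lemma Runs.pos_of_isFront (hr : r ∈ Runs C P) {m i : ℕ} (h : isFront (r m).1 i) : 0 < m := by
  rcases Nat.eq_zero_or_pos m with rfl | hm
  · obtain ⟨l, hl⟩ := h
    simp [hr.1.2.2.1 l] at hl
  · exact hm

lemma Runs.eq_go_of_goingAt (hr : r ∈ Runs C P) {m j : ℕ} (hj : goingAt r m j) :
    P j ((r m).2 j) = Act.go := by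
  by_contra hgo
  exact hj.2 (by rw [frontAt, hr.2 m]; exact isFront_step_of_ne_go hj.1 hgo)

def initState (C : Ctx kin kout Mem Extra Msg) (α : Adversary kin kout) :
    GState kin kout Mem Extra :=
  let e : EnvState kin kout := ⟨α, 0, fun _ => [], ∅⟩
  (e, fun i => (C.iep.initMem i, minimalReading e i, C.iep.extra e i))

def runFrom (C : Ctx kin kout Mem Extra Msg) (P : Prot kin kout Mem Extra)
    (α : Adversary kin kout) : Run kin kout Mem Extra :=
  fun m => (step C.iep P)^[m] (initState C α)

lemma runFrom_mem_Runs {α : Adversary kin kout} (hα : α ∈ C.adv) : runFrom C P α ∈ Runs C P :=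
  ⟨⟨hα, rfl, fun _ => rfl, rfl, fun _ => rfl⟩, fun _ => Function.iterate_succ_apply' _ _ _⟩

end Runs

lemma histOf_length (r : Run kin kout Mem Extra) (m : ℕ) : (histOf r m).length = m := by
  simp [histOf, hist]

lemma gammaEmpty_localState {F : Set (Adversary kin kout)} {P : Prot kin kout Unit ℕ}
    {r : Run kin kout Unit ℕ} (hr : r ∈ Runs (gammaEmpty kin kout F) P) (m i : ℕ) :
    (r m).2 i = ((), minimalReading (r m).1 i, m) := by
  have htime := Runs.time_eq hr m
  cases m with
  | zero => rw [hr.1.2.2.2.2 i]; exact Prod.ext rfl (Prod.ext rfl htime)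
  | succ m => rw [hr.2 m] at htime ⊢; exact Prod.ext rfl (Prod.ext rfl htime)

section TwoArrivals

def twoArrivals (m i j : ℕ) (a b : Move kin kout) (hab : a.1 ≠ b.1) : Adversary kin kout where
  arrive n := if n = i then (m, a) else if n = j then (m, b) else (m + n + 2, a)
  conflictFree := by
    intro p q hpq
    split_ifs <;> simp_all <;> omega
  T := Set.univ
  T_front _ _ := trivial
  Ft _ _ := true
  Fr _ _ := true

variable {m i j : ℕ} {a b : Move kin kout} {hab : a.1 ≠ b.1}

lemma twoArrivals_mem_NFadv : twoArrivals m i j a b hab ∈ NFadv kin kout :=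
  fun _ _ => ⟨rfl, rfl⟩

lemma twoArrivals_arrive_fst : (twoArrivals m i j a b hab).arrive i = (m, a) := if_pos rfl

lemma twoArrivals_arrive_snd (hij : i ≠ j) : (twoArrivals m i j a b hab).arrive j = (m, b) := by
  simp [twoArrivals, hij.symm]

lemma twoArrivals_arrive_ne_of_ne {n t : ℕ} {l : Fin kin} {x : Fin kout} (ht : t ≠ m)
    (ht' : t < m + 2) : (twoArrivals m i j a b hab).arrive n ≠ (t, l, x) := by
  simp only [twoArrivals]
  split_ifs <;> simp only [ne_eq, Prod.mk.injEq, not_and] <;> omega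

lemma twoArrivals_arrive_ne_of_lane_ne {n : ℕ} {l : Fin kin} {x : Fin kout} (ha : l ≠ a.1)
    (hb : l ≠ b.1) : (twoArrivals m i j a b hab).arrive n ≠ (m, l, x) := by
  simp only [twoArrivals]
  split_ifs <;> simp only [ne_eq, Prod.mk.injEq, not_and] <;> grind

variable {C : Ctx kin kout Mem Extra Msg} {P : Prot kin kout Mem Extra}
  {r : Run kin kout Mem Extra}

lemma queue_twoArrivals_of_lt (hr : r ∈ Runs C P) (hα : (r 0).1.adv = twoArrivals m i j a b hab)
    {k : ℕ} (hk : k < m) (l : Fin kin) : (r k).1.queue l = [] := by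
  induction k generalizing l with
  | zero => exact hr.1.2.2.1 l
  | succ k ih =>
    refine List.eq_nil_iff_forall_not_mem.2 fun n hn => ?_
    refine List.not_mem_nil (ih (by omega) l ▸ mem_queue_of_mem_step_queue ?_ (hr.2 k ▸ hn))
    rw [Runs.adv_eq hr, hα, Runs.time_eq hr]
    exact fun _ _ => twoArrivals_arrive_ne_of_ne (by omega) (by omega)

lemma queue_twoArrivals (hr : r ∈ Runs C P) (hα : (r 0).1.adv = twoArrivals m i j a b hab)
    (hij : i ≠ j) (hm : 0 < m) (l : Fin kin) :
    (r m).1.queue l = if l = a.1 then [i] else if l = b.1 then [j] else [] := by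
  obtain ⟨k, rfl⟩ : ∃ k, m = k + 1 := ⟨m - 1, by omega⟩
  have hempty := queue_twoArrivals_of_lt hr hα (Nat.lt_succ_self k)
  have hadv : (r k).1.adv = twoArrivals (k + 1) i j a b hab := by rw [Runs.adv_eq hr, hα]
  have htime : (r k).1.time + 1 = k + 1 := by rw [Runs.time_eq hr]
  rw [hr.2 k]
  split_ifs with hla hlb
  · subst hla
    exact step_queue_eq_singleton (hempty _) (by rw [hadv, twoArrivals_arrive_fst, htime])
  · subst hlb
    exact step_queue_eq_singleton (hempty _) (by rw [hadv, twoArrivals_arrive_snd hij, htime])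
  · refine List.eq_nil_iff_forall_not_mem.2 fun n hn => ?_
    refine List.not_mem_nil (hempty l ▸ mem_queue_of_mem_step_queue ?_ hn)
    rw [hadv, htime]
    exact fun _ _ => twoArrivals_arrive_ne_of_lane_ne hla hlb

lemma minimalReading_twoArrivals_fst (hr : r ∈ Runs C P)
    (hα : (r 0).1.adv = twoArrivals m i j a b hab) (hij : i ≠ j) (hm : 0 < m) :
    minimalReading (r m).1 i = ⟨True, .inLane a.1, a.2⟩ := by
  have hq := queue_twoArrivals hr hα hij hm
  rw [minimalReading_eq_of_queue_eq_singleton (l := a.1) (by simp [hq])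
    (fun l h => by rw [hq] at h; split_ifs at h <;> simp_all),
    intentOf, Runs.adv_eq hr, hα, twoArrivals_arrive_fst]

lemma minimalReading_twoArrivals_snd (hr : r ∈ Runs C P)
    (hα : (r 0).1.adv = twoArrivals m i j a b hab) (hij : i ≠ j) (hm : 0 < m) :
    minimalReading (r m).1 j = ⟨True, .inLane b.1, b.2⟩ := by
  have hq := queue_twoArrivals hr hα hij hm
  rw [minimalReading_eq_of_queue_eq_singleton (l := b.1) (by simp [hq, hab.symm])
    (fun l h => by rw [hq] at h; split_ifs at h <;> simp_all),
    intentOf, Runs.adv_eq hr, hα, twoArrivals_arrive_snd hij]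

lemma goingAt_twoArrivals_snd (hr : r ∈ Runs C P) (hα : (r 0).1.adv = twoArrivals m i j a b hab)
    (hij : i ≠ j) (hm : 0 < m) (hgo : P j ((r m).2 j) = Act.go) : goingAt r m j := by
  have hq := queue_twoArrivals hr hα hij hm
  have hno : ∀ l n x, (r m).1.adv.arrive n ≠ ((r m).1.time + 1, l, x) := by
    rw [Runs.adv_eq hr, hα, Runs.time_eq hr]
    exact fun _ _ _ => twoArrivals_arrive_ne_of_ne (by omega) (by omega)
  refine ⟨⟨b.1, by simp [hq, hab.symm]⟩, fun ⟨l, hl⟩ => ?_⟩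
  rw [hr.2 m] at hl
  have hmem := mem_queue_of_mem_step_queue (hno l) (List.mem_of_mem_head? hl)
  obtain rfl : l = b.1 := by rw [hq] at hmem; split_ifs at hmem <;> simp_all
  rw [step_queue_eq_tail (hno _) (t := []) (by simp [hq, hab.symm]) hgo] at hl
  simp at hl

end TwoArrivals

section Pempty

variable (hkin : 0 < kin) (O : Move kin kout → Move kin kout → Prop)
  {F : Set (Adversary kin kout)}

theorem phiP_of_Pempty_eq_go {r : Run kin kout Unit ℕ}
    (hr : r ∈ Runs (gammaEmpty kin kout F) (Pempty hkin O)) {m i : ℕ}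
    (hgo : Pempty hkin O i ((r m).2 i) = Act.go) :
    phiP O (fun _ => ∅) (fun h => nextL hkin h.length) i r m := by
  rw [gammaEmpty_localState hr, Pempty_eq_go_iff] at hgo
  obtain ⟨l, hl, hfront, hcompat⟩ := hgo
  refine ⟨hfront, Or.inr ⟨_, moveAt_eq_of_lane hl, Set.notMem_empty _,
    fun _ _ _ _ h => absurd h (Set.notMem_empty _), ?_⟩⟩
  intro j mj _ hj hmj _ hcyc
  have hgoj := Runs.eq_go_of_goingAt hr hj
  rw [gammaEmpty_localState hr, Pempty_eq_go_iff] at hgoj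
  obtain ⟨lj, hlj, -, hcompatj⟩ := hgoj
  rw [moveAt_eq_of_lane hlj, Option.some_inj] at hmj
  subst hmj
  simp only [histOf_length] at hcyc
  exact hcompat _ ((mem_PosSet_empty_iff hkin O _ _ _).2 ⟨hcyc, hcompatj⟩)

theorem exists_run_not_phiP (hF : NFadv kin kout ⊆ F) {m i : ℕ} (hm : 0 < m) {l : Fin kin}
    {rd : Reading kin kout} (hfront : rd.front) (hlane : rd.lane = .inLane l)
    {mv : Move kin kout} (hmv : mv ∈ PosSet hkin O ∅ (nextL hkin m) l)
    (hinc : ¬ O (l, rd.intent) mv) :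
    ∃ r ∈ Runs (gammaEmpty kin kout F) (Pempty hkin O),
      (r m).2 i = ((), rd, m) ∧ ¬ phiP O (fun _ => ∅) (fun h => nextL hkin h.length) i r m := by
  obtain ⟨hcyc, hcompat⟩ := (mem_PosSet_empty_iff hkin O _ _ _).1 hmv
  have hab : (l, rd.intent).1 ≠ mv.1 := fun h => lt_irrefl _ (h ▸ hcyc)
  have hij : i ≠ i + 1 := by omega
  obtain ⟨r, hr, hα⟩ : ∃ r ∈ Runs (gammaEmpty kin kout F) (Pempty hkin O),
      (r 0).1.adv = twoArrivals m i (i + 1) (l, rd.intent) mv hab :=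
    ⟨_, runFrom_mem_Runs (hF (twoArrivals_mem_NFadv (hab := hab))), rfl⟩
  have hread_i := minimalReading_twoArrivals_fst hr hα hij hm
  have hread_j := minimalReading_twoArrivals_snd hr hα hij hm
  have hgoing : goingAt r m (i + 1) := by
    refine goingAt_twoArrivals_snd hr hα hij hm ?_
    rw [gammaEmpty_localState hr, hread_j, Pempty_eq_go_iff]
    exact ⟨mv.1, rfl, trivial, hcompat⟩
  refine ⟨r, hr, ?_, ?_⟩
  · rw [gammaEmpty_localState hr, hread_i]
    cases rd
    simp_all
  · rintro ⟨-, ⟨_, -, hempty⟩ | ⟨mv', hmv', -, -, hV⟩⟩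
    · exact hempty
    rw [moveAt_eq_of_lane (by rw [hread_i]), hread_i, Option.some_inj] at hmv'
    subst hmv'
    refine hinc (hV (i + 1) mv hij.symm hgoing ?_ (Set.notMem_empty _) ?_)
    · rw [moveAt_eq_of_lane (by rw [hread_j]), hread_j]
    · simpa only [histOf_length] using hcyc

theorem Pempty_implements_of_NFadv_subset (hF : NFadv kin kout ⊆ F) :
    Implements (gammaEmpty kin kout F) (Pempty hkin O)
      (phiP O (fun _ => ∅) (fun h => nextL hkin h.length)) := by
  intro r hr m i
  refine ⟨fun hgo r' hr' m' hloc => phiP_of_Pempty_eq_go hkin O hr' (hloc ▸ hgo), fun hK => ?_⟩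
  by_contra hwait
  have hfront : (minimalReading (r m).1 i).front := (hK r hr m rfl).1
  obtain ⟨l, hl⟩ := exists_lane_of_isFront hfront
  rw [gammaEmpty_localState hr, Pempty_eq_go_iff] at hwait
  obtain ⟨mv, hmv, hinc⟩ : ∃ mv ∈ PosSet hkin O ∅ (nextL hkin m) l,
      ¬ O (l, (minimalReading (r m).1 i).intent) mv := by
    simpa [compatAll, hl, hfront] using hwait
  obtain ⟨r', hr', hloc, hnot⟩ :=
    exists_run_not_phiP hkin O hF (Runs.pos_of_isFront hr hfront) hfront hl hmv hinc
  exact hnot (hK r' hr' m (hloc.trans (gammaEmpty_localState hr m i).symm))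

end Pempty

lemma NFadv_subset_of_mem {F : Set (Adversary kin kout)}
    (hF : F ∈ ({NFadv kin kout, CRadv kin kout, SOadv kin kout} :
      Set (Set (Adversary kin kout)))) :
    NFadv kin kout ⊆ F := by
  rcases hF with rfl | rfl | rfl
  · exact subset_rfl
  · exact fun α hα => ⟨fun k i => (hα k i).2, fun k i h => by simp [(hα k i).1] at h⟩
  · exact fun α hα k i => (hα k i).2

end Inter

theorem Pempty_implements_kbp_general
    {kin kout : ℕ} (hkin : 0 < kin)
    (O : Move kin kout → Move kin kout → Prop) :
    ∀ F ∈ ({NFadv kin kout, CRadv kin kout, SOadv kin kout} :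
        Set (Set (Adversary kin kout))),
      Implements (gammaEmpty kin kout F) (Pempty hkin O)
        (phiP O (fun _ => (∅ : Set (Move kin kout))) (fun h => nextL hkin h.length)) :=
  fun _ hF => Pempty_implements_of_NFadv_subset hkin O (NFadv_subset_of_mem hF)

/-- `P^∅` implements the knowledge-based program `𝐏` (instantiated with
`next(h) = |h| mod |L_in|` and `σ(h) = ∅`) with respect to `γ_∅(F)` for each
`F ∈ {NF, CR, SO}`. -/
theorem Pempty_implements_kbp
    {kin kout : ℕ} (hkin : 0 < kin)
    (O : Move kin kout → Move kin kout → Prop)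
    (hO : ∀ a b, O a b → O b a) :
    ∀ F ∈ ({NFadv kin kout, CRadv kin kout, SOadv kin kout} :
        Set (Set (Adversary kin kout))),
      Implements (gammaEmpty kin kout F) (Pempty hkin O)
        (phiP O (fun _ => (∅ : Set (Move kin kout))) (fun h => nextL hkin h.length)) :=
  Pempty_implements_kbp_general hkin O
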